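/- arXiv:2603.04912 — 2 statements merged into one kernel-verified Lean document; each statement's English description precedes it below -/
import Mathlib

section
/- Let G be a bipartite graph with parts S = {1,...,m} and T = {1,...,n}, represented as a set E of cells (i,j) ∈ S × T. If E is C₄-free (i.e., there do not exist distinct rows i ≠ k and distinct columns j ≠ l with all four cells (i,j), (i,l), (k,j), (k,l) in E), then for any family of vectors v_{ij} ∈ ℝ^r indexed by cells, satisfying: (a) ‖v_{ij}‖ = 1 for every (i,j) ∈ E, (b) v_{ij} = 0 for every (i,j) ∉ E, (c) v_{ij}·v_{kl} + v_{il}·v_{kj} = 0 for all distinct cells (i,j) ≠ (k,l), and (d) v_{ij}·v_{il} = 0 when j ≠ l and v_{ij}·v_{kj} = 0 when i ≠ k, the vectors {v_{ij} : (i,j) ∈ E} are pairwise orthogonal and hence linearly independent; in particular r ≥ |E|. -/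
theorem stmt0 (m n r : ℕ) (E : Finset (Fin m × Fin n))
    (hC4 : ¬ ∃ (i k : Fin m) (j l : Fin n), i ≠ k ∧ j ≠ l ∧
      (i, j) ∈ E ∧ (i, l) ∈ E ∧ (k, j) ∈ E ∧ (k, l) ∈ E)
    (v : Fin m → Fin n → EuclideanSpace ℝ (Fin r))
    (ha : ∀ i j, (i, j) ∈ E → ‖v i j‖ = 1)
    (hb : ∀ i j, (i, j) ∉ E → v i j = 0)
    (hc : ∀ i j k l, (i, j) ≠ (k, l) →
      (inner ℝ (v i j) (v k l) : ℝ) + (inner ℝ (v i l) (v k j) : ℝ) = 0)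
    (hd : ∀ i j l, j ≠ l → (inner ℝ (v i j) (v i l) : ℝ) = 0)
    (hd' : ∀ i k j, i ≠ k → (inner ℝ (v i j) (v k j) : ℝ) = 0) :
    (∀ p q, p ∈ E → q ∈ E → p ≠ q → (inner ℝ (v p.1 p.2) (v q.1 q.2) : ℝ) = 0) ∧
    LinearIndependent ℝ (fun e : E => v e.1.1 e.1.2) ∧ E.card ≤ r := by
  have horth : ∀ p q, p ∈ E → q ∈ E → p ≠ q →
      (inner ℝ (v p.1 p.2) (v q.1 q.2) : ℝ) = 0 := by
    rintro ⟨i, j⟩ ⟨k, l⟩ hp hq hpq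
    by_cases hik : i = k
    · subst hik
      have hjl : j ≠ l := fun h => hpq (by simp [h])
      exact hd i j l hjl
    by_cases hjl : j = l
    · subst hjl
      exact hd' i k j hik
    · -- i ≠ k, j ≠ l; C4-free gives (i,l) ∉ E or (k,j) ∉ E
      have h4 : (i, l) ∉ E ∨ (k, j) ∉ E := by
        by_contra h
        push_neg at h
        exact hC4 ⟨i, k, j, l, hik, hjl, hp, h.1, h.2, hq⟩
      have hc' := hc i j k l hpq
      rcases h4 with h | h
      · rw [hb i l h] at hc'
        simpa using hc'
      · rw [hb k j h] at hc'
        simpa using hc'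
  have hon : Orthonormal ℝ (fun e : E => v e.1.1 e.1.2) := by
    rw [orthonormal_iff_ite]
    rintro ⟨p, hp⟩ ⟨q, hq⟩
    by_cases hpq : p = q
    · subst hpq
      rw [if_pos rfl]
      rw [real_inner_self_eq_norm_sq, ha p.1 p.2 hp]
      norm_num
    · simp only [if_neg (fun h : (⟨p, hp⟩ : E) = ⟨q, hq⟩ => hpq (congrArg Subtype.val h))]
      exact horth p q hp hq hpq
  have hli := hon.linearIndependent
  refine ⟨horth, hli, ?_⟩
  have := hli.fintype_card_le_finrank
  simpa [Fintype.card_coe] using this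
end

section
/- Up to relabeling of rows and columns, any C₄-free bipartite graph on parts of size 4 and 3 with exactly 7 edges has row-degree sequence (2,2,2,1); in particular no row has degree 3. -/
theorem stmt6 (E : Finset (Fin 4 × Fin 3)) (hcard : E.card = 7)
    (hC4 : ¬ ∃ (i k : Fin 4) (j l : Fin 3), i ≠ k ∧ j ≠ l ∧
      (i, j) ∈ E ∧ (i, l) ∈ E ∧ (k, j) ∈ E ∧ (k, l) ∈ E) :
    (∀ i : Fin 4, (E.filter fun e => e.1 = i).card ≠ 3) ∧
    Multiset.map (fun i : Fin 4 => (E.filter fun e => e.1 = i).card)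
      (Finset.univ : Finset (Fin 4)).val = ({2, 2, 2, 1} : Multiset ℕ) := by
  set d : Fin 4 → ℕ := fun i => (E.filter fun e => e.1 = i).card with hd
  have hsum : ∑ i, d i = 7 := by
    rw [← hcard]
    exact (Finset.card_eq_sum_card_fiberwise (f := Prod.fst)
      (t := Finset.univ) (fun x _ => Finset.mem_univ _)).symm
  have hinj : ∀ i : Fin 4, Set.InjOn (fun e : Fin 4 × Fin 3 => e.2)
      ↑(E.filter fun e => e.1 = i) := by
    intro i a ha b hb hab
    simp only [Finset.coe_filter, Set.mem_setOf_eq] at ha hb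
    exact Prod.ext (ha.2.trans hb.2.symm) hab
  have hle3 : ∀ i, d i ≤ 3 := by
    intro i
    have := Finset.card_le_card_of_injOn (f := fun e : Fin 4 × Fin 3 => e.2)
      (t := Finset.univ) (fun x _ => Finset.mem_univ _) (hinj i)
    simpa using this
  have htwo : ∀ i : Fin 4, 2 ≤ d i → ∃ j l : Fin 3, j ≠ l ∧ (i, j) ∈ E ∧ (i, l) ∈ E := by
    intro i hi
    obtain ⟨a, ha, b, hb, hab⟩ := Finset.one_lt_card.mp hi
    simp only [Finset.mem_filter] at ha hb
    refine ⟨a.2, b.2, ?_, ?_, ?_⟩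
    · intro h
      exact hab (Prod.ext (ha.2.trans hb.2.symm) h)
    · rw [← ha.2, Prod.mk.eta]; exact ha.1
    · rw [← hb.2, Prod.mk.eta]; exact hb.1
  have hne3 : ∀ i, d i ≠ 3 := by
    intro i hi3
    have hall : ∀ j : Fin 3, (i, j) ∈ E := by
      intro j
      have himg : (E.filter fun e => e.1 = i).image (fun e => e.2) =
          (Finset.univ : Finset (Fin 3)) := by
        apply Finset.eq_univ_of_card
        rw [Finset.card_image_of_injOn (hinj i)]
        simpa using hi3
      have : j ∈ (E.filter fun e => e.1 = i).image (fun e => e.2) := by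
        rw [himg]; exact Finset.mem_univ _
      obtain ⟨e, he, hej⟩ := Finset.mem_image.mp this
      simp only [Finset.mem_filter] at he
      rw [← hej, ← he.2, Prod.mk.eta]
      exact he.1
    have hother : ∀ k, k ≠ i → d k ≤ 1 := by
      intro k hk
      by_contra h
      obtain ⟨j, l, hjl, hkj, hkl⟩ := htwo k (by omega)
      exact hC4 ⟨i, k, j, l, fun h' => hk h'.symm, hjl, hall j, hall l, hkj, hkl⟩
    have h1 : ∑ k ∈ Finset.univ.erase i, d k ≤ 3 := by
      calc ∑ k ∈ Finset.univ.erase i, d k ≤ ∑ k ∈ Finset.univ.erase i, 1 :=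
            Finset.sum_le_sum (fun k hk => hother k (Finset.ne_of_mem_erase hk))
        _ = 3 := by simp
    have h2 := Finset.add_sum_erase Finset.univ d (Finset.mem_univ i)
    omega
  refine ⟨hne3, ?_⟩
  have hle2 : ∀ i, d i ≤ 2 := fun i => by have := hle3 i; have := hne3 i; omega
  have huniv : (Finset.univ : Finset (Fin 4)).val = ({0, 1, 2, 3} : Multiset (Fin 4)) := rfl
  rw [huniv]
  have hs : d 0 + d 1 + d 2 + d 3 = 7 := by
    rw [Fin.sum_univ_four] at hsum; omega
  have h0 := hle2 0; have h1 := hle2 1; have h2 := hle2 2; have h3 := hle2 3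
  show ({d 0, d 1, d 2, d 3} : Multiset ℕ) = _
  interval_cases h0' : d 0 <;> interval_cases h1' : d 1 <;>
    interval_cases h2' : d 2 <;> interval_cases h3' : d 3 <;>
    first | omega | rfl | decide
end
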